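/- arXiv:2407.21360 — 2 statements merged into one kernel-verified Lean document; each statement's English description precedes it below -/
import Mathlib

section
/- If a graph G has a c-colouring in which every monochromatic component has at most k vertices, and H has a c-colouring in which every monochromatic component has at most k vertices, and at least one of G, H has at most m vertices, then G ⊠ H (the strong product) has a c-colouring in which every monochromatic component has at most k·m vertices. In particular, G ⊠ H is c-colourable with every monochromatic component of size at most k·|V(G ⊠ H)|^{1/2}. -/
open SimpleGraph

universe u v

/-- The strong product of two simple graphs. -/
def StrongProd {α : Type u} {β : Type v} (G : SimpleGraph α) (H : SimpleGraph β) :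
    SimpleGraph (α × β) where
  Adj x y := (x.1 = y.1 ∧ H.Adj x.2 y.2) ∨ (x.2 = y.2 ∧ G.Adj x.1 y.1) ∨
    (G.Adj x.1 y.1 ∧ H.Adj x.2 y.2)
  symm := by
    refine ⟨?_⟩
    rintro x y (⟨h1, h2⟩ | ⟨h1, h2⟩ | ⟨h1, h2⟩)
    · exact Or.inl ⟨h1.symm, h2.symm⟩
    · exact Or.inr (Or.inl ⟨h1.symm, h2.symm⟩)
    · exact Or.inr (Or.inr ⟨h1.symm, h2.symm⟩)
  loopless := by
    refine ⟨?_⟩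
    rintro x (⟨h1, h2⟩ | ⟨h1, h2⟩ | ⟨h1, h2⟩)
    · exact h2.ne rfl
    · exact h2.ne rfl
    · exact h1.ne rfl

/-- The fan graph `F_n`: a path on `n` vertices (vertices `1,…,n`) together with
one dominant vertex (vertex `0`) adjacent to all path vertices. -/
def Fan (n : ℕ) : SimpleGraph (Fin (n + 1)) :=
  SimpleGraph.fromRel (fun u v => u = 0 ∨ u.val + 1 = v.val)

/-- The cone over `m` disjoint copies of `G`: `m` pairwise disjoint copies of `G`
together with one new vertex adjacent to every vertex of every copy. -/
def GraphCone {V : Type u} (m : ℕ) (G : SimpleGraph V) :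
    SimpleGraph (Option (Fin m × V)) where
  Adj x y :=
    match x, y with
    | none, none => False
    | none, some _ => True
    | some _, none => True
    | some (i, _u), some (j, _v) => i = j ∧ G.Adj _u _v
  symm := by
    refine ⟨?_⟩
    rintro (_ | ⟨i, u⟩) (_ | ⟨j, v⟩) h
    · exact h
    · trivial
    · trivial
    · exact ⟨h.1.symm, h.2.symm⟩
  loopless := by
    refine ⟨?_⟩
    rintro (_ | ⟨i, u⟩) h
    · exact h
    · exact h.2.ne rfl

/-- `G` has a tree-decomposition of width at most `t`. -/
def TreewidthLE {V : Type u} (G : SimpleGraph V) (t : ℕ) : Prop :=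
  ∃ (ι : Type) (T : SimpleGraph ι) (W : ι → Finset V),
    T.IsTree ∧
    (∀ ⦃u v : V⦄, G.Adj u v → ∃ x, u ∈ W x ∧ v ∈ W x) ∧
    (∀ v : V, (T.induce {x | v ∈ W x}).Connected) ∧
    (∀ x, (W x).card ≤ t + 1)

/-- A set of vertices is monochromatic under a colouring `f`. -/
def IsMonochromatic {V : Type u} {c : ℕ} (f : V → Fin c) (S : Finset V) : Prop :=
  ∀ u ∈ S, ∀ v ∈ S, f u = f v

/-- Every monochromatic component of the colouring `f` of `G` has at most `k` vertices. -/
def ClusterLE {V : Type u} {c : ℕ} (G : SimpleGraph V) (f : V → Fin c) (k : ℕ) : Prop :=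
  ∀ S : Finset V, IsMonochromatic f S → (G.induce (S : Set V)).Connected → S.card ≤ k

/-- Every monochromatic component of the colouring `f` of `G` has at most `b` vertices
(real-valued bound). -/
def ClusterLEReal {V : Type u} {c : ℕ} (G : SimpleGraph V) (f : V → Fin c) (b : ℝ) : Prop :=
  ∀ S : Finset V, IsMonochromatic f S → (G.induce (S : Set V)).Connected → (S.card : ℝ) ≤ b

/-! When `|V(G)| ≤ m`, colour `(a, b)` by the colour of `b` in `H`. The projection to `H`
sends each edge of `G ⊠ H` to an edge or to a single vertex, so it maps a monochromatic
connected set `S` onto a monochromatic connected set of `H`, which has at most `k` vertices;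
since every fibre of the projection has `|V(G)|` elements, `|S| ≤ |V(G)| k`. Choosing the
smaller factor gives the bound `k · min(|V(G)|, |V(H)|) ≤ k · |V(G ⊠ H)|^{1/2}`. -/

namespace SimpleGraph

variable {V W : Type*} {G : SimpleGraph V} {H : SimpleGraph W}

theorem Reachable.map_of_adj {φ : V → W}
    (hφ : ∀ x y, G.Adj x y → φ x = φ y ∨ H.Adj (φ x) (φ y)) {x y : V} (h : G.Reachable x y) :
    H.Reachable (φ x) (φ y) := by
  rw [reachable_iff_reflTransGen] at h ⊢
  refine h.lift' φ fun a b hab => show Relation.ReflTransGen H.Adj (φ a) (φ b) from ?_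
  rcases hφ a b hab with heq | hadj
  · exact heq ▸ Relation.ReflTransGen.refl
  · exact Relation.ReflTransGen.single hadj

theorem Connected.induce_image {s : Set V} (φ : V → W)
    (hφ : ∀ x y, G.Adj x y → φ x = φ y ∨ H.Adj (φ x) (φ y)) (hs : (G.induce s).Connected) :
    (H.induce (φ '' s)).Connected := by
  let ψ : s → φ '' s := fun x => ⟨φ x, Set.mem_image_of_mem φ x.2⟩
  have hψ : ∀ x y, (G.induce s).Adj x y → ψ x = ψ y ∨ (H.induce (φ '' s)).Adj (ψ x) (ψ y) :=
    fun x y hxy => (hφ x y hxy).imp_left Subtype.ext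
  have : Nonempty (φ '' s) := hs.nonempty.map ψ
  refine ⟨fun ⟨_, x, hx, hxb⟩ ⟨_, y, hy, hyb⟩ => ?_⟩
  subst hxb hyb
  exact (hs.preconnected ⟨x, hx⟩ ⟨y, hy⟩).map_of_adj hψ

end SimpleGraph

section StrongProd

variable {V₁ V₂ : Type*} {G : SimpleGraph V₁} {H : SimpleGraph V₂}

theorem StrongProd.adj_fst {x y : V₁ × V₂} (h : (StrongProd G H).Adj x y) :
    x.1 = y.1 ∨ G.Adj x.1 y.1 := by
  rcases h with ⟨h, -⟩ | ⟨-, h⟩ | ⟨h, -⟩ <;> simp [h]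

theorem StrongProd.adj_snd {x y : V₁ × V₂} (h : (StrongProd G H).Adj x y) :
    x.2 = y.2 ∨ H.Adj x.2 y.2 := by
  rcases h with ⟨-, h⟩ | ⟨h, -⟩ | ⟨-, h⟩ <;> simp [h]

end StrongProd

section Clustering

variable {V W : Type*} {c k : ℕ} {G : SimpleGraph V} {H : SimpleGraph W}

theorem IsMonochromatic.image [DecidableEq W] {g : W → Fin c} {φ : V → W} {S : Finset V}
    (hS : IsMonochromatic (g ∘ φ) S) : IsMonochromatic g (S.image φ) := by
  simpa [IsMonochromatic, Finset.forall_mem_image] using hS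

theorem ClusterLE.mono {f : V → Fin c} {k' : ℕ} (hf : ClusterLE G f k) (hk : k ≤ k') :
    ClusterLE G f k' :=
  fun S hS hconn => (hf S hS hconn).trans hk

theorem ClusterLE.toReal {f : V → Fin c} {b : ℝ} (hf : ClusterLE G f k) (hk : (k : ℝ) ≤ b) :
    ClusterLEReal G f b :=
  fun S hS hconn => (Nat.cast_le.2 (hf S hS hconn)).trans hk

theorem ClusterLE.comp [Fintype V] [DecidableEq W] {g : W → Fin c} (hg : ClusterLE H g k)
    (φ : V → W) (hφ : ∀ x y, G.Adj x y → φ x = φ y ∨ H.Adj (φ x) (φ y)) {n : ℕ}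
    (hfibre : ∀ b, (Finset.univ.filter (φ · = b)).card ≤ n) : ClusterLE G (g ∘ φ) (n * k) := by
  intro S hS hconn
  have himage : (S.image φ).card ≤ k := by
    refine hg _ hS.image ?_
    rw [Finset.coe_image]
    exact hconn.induce_image φ hφ
  calc S.card ≤ n * (S.image φ).card :=
        Finset.card_le_mul_card_image S n fun b _ =>
          (Finset.card_le_card (Finset.filter_subset_filter _ (Finset.subset_univ S))).trans
            (hfibre b)
    _ ≤ n * k := Nat.mul_le_mul_left n himage

end Clustering

section StrongProdColouring

variable {V₁ V₂ : Type*} [Fintype V₁] [Fintype V₂] {c k : ℕ}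
  {G : SimpleGraph V₁} {H : SimpleGraph V₂}

theorem ClusterLE.strongProd_comp_snd [DecidableEq V₂] {g : V₂ → Fin c} (hg : ClusterLE H g k) :
    ClusterLE (StrongProd G H) (g ∘ Prod.snd) (Fintype.card V₁ * k) :=
  hg.comp Prod.snd (fun _ _ => StrongProd.adj_snd) fun _ =>
    Finset.card_le_card_of_injOn Prod.fst (by simp) fun _ hx _ hy hxy => Prod.ext hxy (by simp_all)

theorem ClusterLE.strongProd_comp_fst [DecidableEq V₁] {f : V₁ → Fin c} (hf : ClusterLE G f k) :
    ClusterLE (StrongProd G H) (f ∘ Prod.fst) (Fintype.card V₂ * k) :=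
  hf.comp Prod.fst (fun _ _ => StrongProd.adj_fst) fun _ =>
    Finset.card_le_card_of_injOn Prod.snd (by simp) fun _ hx _ hy hxy => Prod.ext (by simp_all) hxy

theorem exists_clusterLE_strongProd {f : V₁ → Fin c} (hf : ClusterLE G f k)
    {g : V₂ → Fin c} (hg : ClusterLE H g k) {m : ℕ}
    (hm : Fintype.card V₁ ≤ m ∨ Fintype.card V₂ ≤ m) :
    ∃ h : V₁ × V₂ → Fin c, ClusterLE (StrongProd G H) h (k * m) := by
  classical
  rcases hm with hm | hm
  · exact ⟨_, hg.strongProd_comp_snd.mono (mul_comm k m ▸ Nat.mul_le_mul_right k hm)⟩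
  · exact ⟨_, hf.strongProd_comp_fst.mono (mul_comm k m ▸ Nat.mul_le_mul_right k hm)⟩

end StrongProdColouring

theorem Real.min_le_sqrt_mul {a b : ℝ} (ha : 0 ≤ a) (hb : 0 ≤ b) : min a b ≤ √(a * b) :=
  (Real.le_sqrt (le_min ha hb) (mul_nonneg ha hb)).2 <| by
    rw [sq]
    exact mul_le_mul (min_le_left a b) (min_le_right a b) (le_min ha hb) ha

/-- Product colouring: if `G` and `H` are `c`-colourable with clustering at most `k`,
and one factor has at most `m` vertices, then `G ⊠ H` is `c`-colourable with clustering
at most `k * m`; in particular with clustering at most `k * |V(G ⊠ H)|^{1/2}`. -/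
theorem strongProd_product_colouring {V₁ V₂ : Type} [Fintype V₁] [Fintype V₂]
    (G : SimpleGraph V₁) (H : SimpleGraph V₂) (c k m : ℕ)
    (f : V₁ → Fin c) (hf : ClusterLE G f k)
    (g : V₂ → Fin c) (hg : ClusterLE H g k)
    (hm : Fintype.card V₁ ≤ m ∨ Fintype.card V₂ ≤ m) :
    (∃ h : V₁ × V₂ → Fin c, ClusterLE (StrongProd G H) h (k * m)) ∧
    (∃ h : V₁ × V₂ → Fin c, ClusterLEReal (StrongProd G H) h
      ((k : ℝ) * Real.sqrt (Fintype.card (V₁ × V₂)))) := by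
  refine ⟨exists_clusterLE_strongProd hf hg hm, ?_⟩
  obtain ⟨h, hh⟩ := exists_clusterLE_strongProd hf hg (m := min (Fintype.card V₁) (Fintype.card V₂))
    (by omega)
  refine ⟨h, hh.toReal ?_⟩
  rw [Fintype.card_prod, Nat.cast_mul, Nat.cast_mul, Nat.cast_min]
  exact mul_le_mul_of_nonneg_left (Real.min_le_sqrt_mul (Nat.cast_nonneg _) (Nat.cast_nonneg _))
    (Nat.cast_nonneg k)
end

section
/- Let c, k ≥ 2 be integers, H a graph, and P a path, such that (i) every (c−1)-colouring of H has a monochromatic component of size at least k, and (ii) every c-colouring of H ⊠ P has a monochromatic component of size at least k. Let J be the cone over (k−1) disjoint copies of H. Then every (c+1)-colouring of J ⊠ P has a monochromatic component of size at least k. -/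
/-!
Suppose every monochromatic component of `g` has fewer than `k` vertices, and call the vertices
`(none, t)` of `J ⊠ P` the apex column. Let `C` be a monochromatic component meeting the apex
column, and fix one of the `k - 1` copies of `H ⊠ P`. If `C` contains the whole apex column, of
colour `a`, then by (ii) the copy has a vertex of colour `a`, which is adjacent to the apex vertex
of its layer. Otherwise the apex column leaves `C` between two adjacent layers `t, t'`, whose apex
vertices then have different colours, and by (i) the copy of `H` in layer `t` has a vertex of one
of these two colours, adjacent to `(none, t)` and to `(none, t')`. Either way the copy has a vertex
in a layer `t` with `(none, t) ∈ C` lying in a component that meets the apex column. These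
vertices are distinct for distinct pairs of a component and a copy, so the `q` components meeting
the apex column contain the `p` apex vertices and `q (k - 1)` more, whereas they have at most
`q (k - 1)` vertices; hence `p = 0`, which (ii) rules out.
-/

open SimpleGraph

universe u v

open Finset Function

section Monochromatic

variable {U W : Type*} {n n' K : ℕ}

def monochromaticGraph (G : SimpleGraph W) (g : W → Fin n) : SimpleGraph W where
  Adj a b := G.Adj a b ∧ g a = g b
  symm := ⟨fun _ _ h => ⟨h.1.symm, h.2.symm⟩⟩
  loopless := ⟨fun _ h => h.1.ne rfl⟩

variable {G : SimpleGraph W} {g : W → Fin n}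

lemma monochromaticGraph_le : monochromaticGraph G g ≤ G := fun _ _ h => h.1

lemma SimpleGraph.Reachable.apply_eq_of_monochromaticGraph {x y : W}
    (h : (monochromaticGraph G g).Reachable x y) : g x = g y := by
  obtain ⟨w⟩ := h
  induction w with
  | nil => rfl
  | cons hadj _ ih => exact hadj.2.trans ih

lemma ClusterLE.card_le_of_forall_reachable (hb : ClusterLE G g K) (r : W) (F : Finset W)
    (hF : ∀ x ∈ F, (monochromaticGraph G g).Reachable r x) : F.card ≤ K := by
  classical
  have hF' : ∀ x ∈ insert r F, (monochromaticGraph G g).Reachable r x :=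
    forall_mem_insert _ _ _ |>.mpr ⟨Reachable.refl r, hF⟩
  let walk (x : (insert r F : Finset W)) := (hF' x x.2).some
  let S := (insert r F).attach.biUnion fun x => (walk x).support.toFinset
  have hmem {z} : z ∈ S ↔ ∃ x, z ∈ (walk x).support := by
    simp only [S, mem_biUnion, mem_attach, true_and, List.mem_toFinset]
  have hreach : ∀ z ∈ S, (monochromaticGraph G g).Reachable r z := fun z hz => by
    obtain ⟨x, hzx⟩ := hmem.mp hz
    exact ⟨(walk x).takeUntil z hzx⟩
  have hconn : ((monochromaticGraph G g).induce (S : Set W)).Connected := by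
    have hr : r ∈ S := hmem.mpr ⟨⟨r, mem_insert_self r F⟩, Walk.start_mem_support _⟩
    refine induce_connected_of_patches r hr fun {z} hz => ?_
    obtain ⟨x, hzx⟩ := hmem.mp hz
    exact ⟨_, fun y hy => hmem.mpr ⟨x, hy⟩, Walk.start_mem_support _, hzx,
      (walk x).connected_induce_support _ _⟩
  have hS : IsMonochromatic g S := fun u hu v hv =>
    (hreach u hu).apply_eq_of_monochromaticGraph.symm.trans
      (hreach v hv).apply_eq_of_monochromaticGraph
  have hFS : F ⊆ S := fun x hx =>
    hmem.mpr ⟨⟨x, mem_insert_of_mem hx⟩, Walk.end_mem_support _⟩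
  exact (card_le_card hFS).trans (hb S hS (hconn.mono fun _ _ h => monochromaticGraph_le h))

lemma ClusterLE.card_le_mul_of_connectedComponentMk_mem (hb : ClusterLE G g K)
    (𝒞 : Finset (monochromaticGraph G g).ConnectedComponent) (F : Finset W)
    (hF : ∀ x ∈ F, (monochromaticGraph G g).connectedComponentMk x ∈ 𝒞) :
    F.card ≤ 𝒞.card * K := by
  classical
  rw [mul_comm]
  refine card_le_mul_card_image_of_maps_to hF K fun C _ => ?_
  obtain ⟨r, rfl⟩ := C.exists_rep
  exact hb.card_le_of_forall_reachable r _ fun x hx =>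
    (ConnectedComponent.exact (mem_filter.mp hx).2).symm

lemma not_clusterLE_of_lt_card {S : Finset W} (hS : IsMonochromatic g S)
    (hconn : (G.induce (S : Set W)).Connected) (hK : K < S.card) : ¬ ClusterLE G g K :=
  fun h => (h S hS hconn).not_gt hK

lemma ClusterLE.comap {G' : SimpleGraph U} {f : U → Fin n'} (hb : ClusterLE G g K)
    (φ : G' →g G) (hφ : Injective φ) (hfg : ∀ u v, f u = f v → g (φ u) = g (φ v)) :
    ClusterLE G' f K := by
  classical
  intro S hS hconn
  have hsurj : Surjective (induceHom φ (Set.mapsTo_image φ (S : Set U))) := by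
    rintro ⟨_, u, hu, rfl⟩
    exact ⟨⟨u, hu⟩, rfl⟩
  have hconn' := hconn.map _ hsurj
  rw [← coe_image] at hconn'
  rw [← card_image_of_injective S hφ]
  refine hb _ ?_ hconn'
  simp only [IsMonochromatic, mem_image, forall_exists_index, and_imp, forall_apply_eq_imp_iff₂]
  exact fun u hu v hv => hfg u v (hS u hu v hv)

lemma exists_factor_of_forall_notMem (h : U → Fin n) (A : Finset (Fin n))
    (hA : n ≤ n' + A.card) (havoid : ∀ u, h u ∉ A) :
    ∃ f : U → Fin n', ∀ u v, f u = f v → h u = h v := by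
  obtain ⟨e⟩ : Nonempty ({x // x ∉ A} ↪ Fin n') :=
    Function.Embedding.nonempty_of_card_le (by simp [Fintype.card_subtype_compl]; omega)
  exact ⟨fun u => e ⟨h u, havoid u⟩, fun u v huv => congrArg Subtype.val (e.injective huv)⟩

lemma ClusterLE.exists_apply_mem_of_hom {G' : SimpleGraph U} (hb : ClusterLE G g K)
    (φ : G' →g G) (hφ : Injective φ) (hG' : ∀ f : U → Fin n', ¬ ClusterLE G' f K)
    (A : Finset (Fin n)) (hA : n ≤ n' + A.card) : ∃ u, g (φ u) ∈ A := by
  by_contra! h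
  obtain ⟨f, hf⟩ := exists_factor_of_forall_notMem (g ∘ φ) A hA h
  exact hG' f (hb.comap φ hφ hf)

end Monochromatic

section Maps

variable {α β γ V : Type*} {G₁ : SimpleGraph α} {G₂ : SimpleGraph β} {P : SimpleGraph γ}

def GraphCone.inclusion (m : ℕ) (G : SimpleGraph V) (i : Fin m) : G →g GraphCone m G where
  toFun v := some (i, v)
  map_rel' h := ⟨rfl, h⟩

lemma GraphCone.inclusion_injective (m : ℕ) (G : SimpleGraph V) (i : Fin m) :
    Injective (GraphCone.inclusion m G i) := fun _ _ h =>
  (Prod.ext_iff.mp (Option.some_injective _ h)).2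

def StrongProd.mapLeft (φ : G₁ →g G₂) (P : SimpleGraph γ) :
    StrongProd G₁ P →g StrongProd G₂ P where
  toFun := Prod.map φ id
  map_rel' := by
    rintro ⟨a, s⟩ ⟨b, t⟩ (⟨rfl, h⟩ | ⟨rfl, h⟩ | ⟨h, h'⟩)
    · exact Or.inl ⟨rfl, h⟩
    · exact Or.inr (Or.inl ⟨rfl, φ.map_adj h⟩)
    · exact Or.inr (Or.inr ⟨φ.map_adj h, h'⟩)

lemma StrongProd.mapLeft_injective {φ : G₁ →g G₂} (hφ : Injective φ) (P : SimpleGraph γ) :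
    Injective (StrongProd.mapLeft φ P) := hφ.prodMap injective_id

def StrongProd.layer (G : SimpleGraph α) (P : SimpleGraph γ) (t : γ) :
    G →g StrongProd G P where
  toFun a := (a, t)
  map_rel' h := Or.inr (Or.inl ⟨rfl, h⟩)

lemma StrongProd.layer_injective (G : SimpleGraph α) (P : SimpleGraph γ) (t : γ) :
    Injective (StrongProd.layer G P t) := fun _ _ h => (Prod.ext_iff.mp h).1

lemma StrongProd.adj_of_adj_of_eq_or_adj {G : SimpleGraph α} {a b : α} {s t : γ}
    (hab : G.Adj a b) (hst : s = t ∨ P.Adj s t) : (StrongProd G P).Adj (a, s) (b, t) := by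
  rcases hst with rfl | hst
  · exact Or.inr (Or.inl ⟨rfl, hab⟩)
  · exact Or.inr (Or.inr ⟨hab, hst⟩)

end Maps

section Cone

variable {V : Type*} {H : SimpleGraph V} {m p n n₁ n₂ K : ℕ}
  {g : Option (Fin m × V) × Fin p → Fin n}

local notation "𝒢" => StrongProd (GraphCone m H) (pathGraph p)
local notation "ℳ" => monochromaticGraph (StrongProd (GraphCone m H) (pathGraph p)) g

open Classical in
noncomputable def apexComponents (H : SimpleGraph V) (g : Option (Fin m × V) × Fin p → Fin n) :
    Finset (monochromaticGraph (StrongProd (GraphCone m H) (pathGraph p)) g).ConnectedComponent :=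
  univ.image fun t => connectedComponentMk _ (none, t)

lemma mem_apexComponents {C : (ℳ).ConnectedComponent} :
    C ∈ apexComponents H g ↔ ∃ t, connectedComponentMk ℳ (none, t) = C := by
  simp [apexComponents]

lemma apex_adj (i : Fin m) (v : V) {s t : Fin p} (hst : s = t ∨ (pathGraph p).Adj s t) :
    (𝒢).Adj (some (i, v), s) (none, t) :=
  StrongProd.adj_of_adj_of_eq_or_adj (G := GraphCone m H) trivial hst

lemma connectedComponentMk_mem_apexComponents {x} {t : Fin p} (hadj : (𝒢).Adj x (none, t))
    (hcol : g x = g (none, t)) : connectedComponentMk ℳ x ∈ apexComponents H g :=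
  mem_apexComponents.mpr
    ⟨t, (ConnectedComponent.connectedComponentMk_eq_of_adj (G := ℳ) ⟨hadj, hcol⟩).symm⟩

lemma exists_copy_vertex_of_apex_connected (hb : ClusterLE 𝒢 g K)
    (h2 : ∀ f : V × Fin p → Fin n₂, ¬ ClusterLE (StrongProd H (pathGraph p)) f K)
    (hn₂ : n ≤ n₂ + 1) {t₀ : Fin p}
    (hall : ∀ t, connectedComponentMk ℳ (none, t) = connectedComponentMk ℳ (none, t₀))
    (i : Fin m) :
    ∃ v t, connectedComponentMk ℳ (none, t) = connectedComponentMk ℳ (none, t₀) ∧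
      connectedComponentMk ℳ (some (i, v), t) ∈ apexComponents H g := by
  obtain ⟨⟨v, t⟩, hvt⟩ := hb.exists_apply_mem_of_hom _
    (StrongProd.mapLeft_injective (GraphCone.inclusion_injective m H i) _) h2 {g (none, t₀)}
    (by simpa using hn₂)
  refine ⟨v, t, hall t, connectedComponentMk_mem_apexComponents (apex_adj i v (Or.inl rfl)) ?_⟩
  exact (mem_singleton.mp hvt).trans
    (ConnectedComponent.exact (hall t)).apply_eq_of_monochromaticGraph.symm

lemma exists_copy_vertex_of_apex_not_connected (hb : ClusterLE 𝒢 g K)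
    (h1 : ∀ f : V → Fin n₁, ¬ ClusterLE H f K) (hn₁ : n ≤ n₁ + 2) {t₀ t₁ : Fin p}
    (hne : connectedComponentMk ℳ (none, t₁) ≠ connectedComponentMk ℳ (none, t₀))
    (i : Fin m) :
    ∃ v t, connectedComponentMk ℳ (none, t) = connectedComponentMk ℳ (none, t₀) ∧
      connectedComponentMk ℳ (some (i, v), t) ∈ apexComponents H g := by
  obtain ⟨d, -, hd, hd'⟩ := ((pathGraph_preconnected p) t₀ t₁).some.exists_boundary_dart
    {t | connectedComponentMk ℳ (none, t) = connectedComponentMk ℳ (none, t₀)} rfl hne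
  have hcol : g (none, d.fst) ≠ g (none, d.snd) := fun h =>
    hd' ((ConnectedComponent.connectedComponentMk_eq_of_adj (G := ℳ) (v := (none, d.fst))
      (w := (none, d.snd)) ⟨Or.inl ⟨rfl, d.adj⟩, h⟩).symm.trans hd)
  obtain ⟨v, hv⟩ := hb.exists_apply_mem_of_hom
    ((StrongProd.layer (GraphCone m H) (pathGraph p) d.fst).comp (GraphCone.inclusion m H i))
    ((StrongProd.layer_injective (GraphCone m H) (pathGraph p) d.fst).comp
      (GraphCone.inclusion_injective m H i)) h1
    {g (none, d.fst), g (none, d.snd)} (by rwa [card_pair hcol])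
  refine ⟨v, d.fst, hd, ?_⟩
  rcases mem_insert.mp hv with h | h
  · exact connectedComponentMk_mem_apexComponents (apex_adj i v (Or.inl rfl)) h
  · exact connectedComponentMk_mem_apexComponents (apex_adj i v (Or.inr d.adj))
      (mem_singleton.mp h)

lemma exists_copy_vertex (hb : ClusterLE 𝒢 g K) (h1 : ∀ f : V → Fin n₁, ¬ ClusterLE H f K)
    (hn₁ : n ≤ n₁ + 2)
    (h2 : ∀ f : V × Fin p → Fin n₂, ¬ ClusterLE (StrongProd H (pathGraph p)) f K)
    (hn₂ : n ≤ n₂ + 1) {C : (ℳ).ConnectedComponent} (hC : C ∈ apexComponents H g)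
    (i : Fin m) :
    ∃ v t, connectedComponentMk ℳ (none, t) = C ∧
      connectedComponentMk ℳ (some (i, v), t) ∈ apexComponents H g := by
  obtain ⟨t₀, rfl⟩ := mem_apexComponents.mp hC
  by_cases hall : ∀ t, connectedComponentMk ℳ (none, t) = connectedComponentMk ℳ (none, t₀)
  · exact exists_copy_vertex_of_apex_connected hb h2 hn₂ hall i
  · obtain ⟨t₁, ht₁⟩ := not_forall.mp hall
    exact exists_copy_vertex_of_apex_not_connected hb h1 hn₁ ht₁ i

lemma eq_zero_of_forall_exists_copy_vertex (hb : ClusterLE 𝒢 g m)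
    (hw : ∀ C ∈ apexComponents H g, ∀ i : Fin m,
      ∃ v t, connectedComponentMk ℳ (none, t) = C ∧
        connectedComponentMk ℳ (some (i, v), t) ∈ apexComponents H g) :
    p = 0 := by
  classical
  choose v t hvt hmem using hw
  let ω (x : apexComponents H g × Fin m) : Option (Fin m × V) × Fin p :=
    (some (x.2, v x.1.1 x.1.2 x.2), t x.1.1 x.1.2 x.2)
  have hω : Injective ω := by
    rintro ⟨⟨C, hC⟩, i⟩ ⟨⟨C', hC'⟩, j⟩ h
    simp only [ω, Prod.mk.injEq, Option.some.injEq] at h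
    obtain ⟨⟨rfl, -⟩, ht⟩ := h
    obtain rfl : C = C' := (hvt C hC i).symm.trans (ht ▸ hvt C' hC' i)
    rfl
  let apex (t : Fin p) : Option (Fin m × V) × Fin p := (none, t)
  have hapex : Injective apex := fun _ _ h => (Prod.ext_iff.mp h).2
  have hdisj : Disjoint (univ.image apex) (univ.image ω) := by
    simp [Finset.disjoint_left, apex, ω]
  have hcard := hb.card_le_mul_of_connectedComponentMk_mem (apexComponents H g)
    (univ.image apex ∪ univ.image ω) (by
      simp only [mem_union, mem_image, mem_univ, true_and]
      rintro x (⟨s, rfl⟩ | ⟨y, rfl⟩)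
      · exact mem_apexComponents.mpr ⟨s, rfl⟩
      · exact hmem _ _ _)
  rw [card_union_of_disjoint hdisj, card_image_of_injective _ hapex,
    card_image_of_injective _ hω, card_univ, card_univ, Fintype.card_prod, Fintype.card_coe,
    Fintype.card_fin, Fintype.card_fin] at hcard
  simpa using hcard

end Cone

/-- If every `(c−1)`-colouring of `H` has a monochromatic component of size at least
`k`, and every `c`-colouring of `H ⊠ P` has a monochromatic component of size at least
`k`, then every `(c+1)`-colouring of `J ⊠ P` has a monochromatic component of size at
least `k`, where `J` is the cone over `k−1` disjoint copies of `H`. -/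
theorem induction_lower (c k : ℕ) (hc : 2 ≤ c) (hk : 2 ≤ k) {V : Type} (H : SimpleGraph V)
    (p : ℕ)
    (h1 : ∀ f : V → Fin (c - 1), ∃ S : Finset V, IsMonochromatic f S ∧
      (H.induce (S : Set V)).Connected ∧ k ≤ S.card)
    (h2 : ∀ f : V × Fin p → Fin c, ∃ S : Finset (V × Fin p), IsMonochromatic f S ∧
      ((StrongProd H (SimpleGraph.pathGraph p)).induce (S : Set (V × Fin p))).Connected ∧
      k ≤ S.card) :
    ∀ g : Option (Fin (k - 1) × V) × Fin p → Fin (c + 1),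
      ∃ S : Finset (Option (Fin (k - 1) × V) × Fin p), IsMonochromatic g S ∧
        ((StrongProd (GraphCone (k - 1) H) (SimpleGraph.pathGraph p)).induce
          (S : Set (Option (Fin (k - 1) × V) × Fin p))).Connected ∧
        k ≤ S.card := by
  intro g
  by_contra! hg
  have hb : ClusterLE (StrongProd (GraphCone (k - 1) H) (pathGraph p)) g (k - 1) :=
    fun S hS hconn => Nat.le_sub_one_of_lt (hg S hS hconn)
  have h1' : ∀ f, ¬ ClusterLE H f (k - 1) := fun f =>
    let ⟨_, hS, hconn, hcard⟩ := h1 f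
    not_clusterLE_of_lt_card hS hconn (by omega)
  have h2' : ∀ f, ¬ ClusterLE (StrongProd H (pathGraph p)) f (k - 1) := fun f =>
    let ⟨_, hS, hconn, hcard⟩ := h2 f
    not_clusterLE_of_lt_card hS hconn (by omega)
  have hp : p ≠ 0 := by
    rintro rfl
    obtain ⟨S, -, -, hS⟩ := h2 isEmptyElim
    rw [S.eq_empty_of_isEmpty, card_empty] at hS
    omega
  exact hp (eq_zero_of_forall_exists_copy_vertex hb fun C hC i =>
    exists_copy_vertex hb h1' (by omega) h2' (by omega) hC i)
end
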